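/- arXiv:1310.7843 — 7 statements merged into one kernel-verified Lean document; each statement's English description precedes it below -/
import Mathlib

section
/- Let K be a field with char K = 0 or char K > n. Let M be a K-subspace of Mat_n(K) with tr(A) = 0 for all A ∈ M. If A ∈ Mat_n(K) satisfies A^m ∈ M for all sufficiently large m, then A is nilpotent. -/
/-!
Pass to an algebraic closure, where the space splits into generalized eigenspaces `V_μ`. On
`V_μ` the endomorphism is `μ` plus a nilpotent, so `tr (f ^ m) = ∑ μ, dim V_μ • μ ^ m`. Vanishing
of these power sums for all large `m` forces `dim V_μ • μ ^ N = 0` (Vandermonde), and since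
`1 ≤ dim V_μ ≤ n` is invertible in `K`, every eigenvalue is `0`.
-/

open Module LinearMap

theorem mul_pow_eq_zero_of_forall_ge_sum_mul_pow_eq_zero {R : Type*} [CommRing R] [IsDomain R]
    {s : Finset R} {c : R → R} {N : ℕ} (h : ∀ m ≥ N, ∑ μ ∈ s, c μ * μ ^ m = 0) :
    ∀ μ ∈ s, c μ * μ ^ N = 0 := by
  let e := s.equivFin
  have := Matrix.eq_zero_of_forall_pow_sum_mul_pow_eq_zero (f := fun j ↦ (e.symm j : R))
    (v := fun j ↦ c (e.symm j) * (e.symm j : R) ^ N)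
    (Subtype.val_injective.comp e.symm.injective) fun i ↦ ?_
  · intro μ hμ
    simpa using congr_fun this (e ⟨μ, hμ⟩)
  · rw [← h (N + i) (by omega), ← s.sum_coe_sort, ← e.symm.sum_comp]
    simp only [pow_add, mul_assoc]

namespace Module.End

theorem trace_pow_of_isNilpotent_sub_algebraMap {R M : Type*} [CommRing R] [IsReduced R]
    [AddCommGroup M] [Module R M] [Module.Free R M] [Module.Finite R M]
    {g : End R M} {μ : R} (hg : IsNilpotent (g - algebraMap R _ μ)) (m : ℕ) :
    trace R M (g ^ m) = μ ^ m * finrank R M := by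
  induction m with
  | zero => simp
  | succ m ih =>
    rw [pow_succ, mul_eq_comp,
      trace_comp_eq_mul_of_commute_of_isNilpotent μ ((Commute.refl g).pow_left m) hg, ih]
    ring

theorem isNilpotent_of_maxGenEigenspace_zero_eq_top {R M : Type*} [CommRing R] [AddCommGroup M]
    [Module R M] [Module.Finite R M] {f : End R M} (hf : f.maxGenEigenspace 0 = ⊤) :
    IsNilpotent f := by
  refine isNilpotent_iff_of_finite.mpr fun x ↦ ?_
  simpa using (f.mem_maxGenEigenspace 0 x).mp (hf ▸ Submodule.mem_top)

variable {K V : Type*} [Field K] [AddCommGroup V] [Module K V] [FiniteDimensional K V]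

theorem trace_pow_restrict_maxGenEigenspace (f : End K V) (μ : K) (m : ℕ) :
    trace K _ ((f ^ m).restrict
        (f.mapsTo_maxGenEigenspace_of_comm ((Commute.refl f).pow_right m) μ)) =
      μ ^ m * finrank K (f.maxGenEigenspace μ) := by
  rw [← pow_restrict m (f.mapsTo_maxGenEigenspace_of_comm (Commute.refl f) μ)]
  refine trace_pow_of_isNilpotent_sub_algebraMap ?_ m
  convert f.isNilpotent_restrict_maxGenEigenspace_sub_algebraMap μ using 1
  ext
  rfl

theorem finite_maxGenEigenspace_ne_bot (f : End K V) : {μ | f.maxGenEigenspace μ ≠ ⊥}.Finite :=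
  WellFoundedGT.finite_ne_bot_of_iSupIndep f.independent_maxGenEigenspace

theorem trace_pow_eq_sum_maxGenEigenspace {f : End K V} (hf : ⨆ μ, f.maxGenEigenspace μ = ⊤)
    (m : ℕ) : trace K V (f ^ m) = ∑ μ ∈ f.finite_maxGenEigenspace_ne_bot.toFinset,
      finrank K (f.maxGenEigenspace μ) * μ ^ m := by
  classical
  rw [trace_eq_sum_trace_restrict'
    (DirectSum.isInternal_submodule_of_iSupIndep_of_iSup_eq_top f.independent_maxGenEigenspace hf)
    f.finite_maxGenEigenspace_ne_bot
    (fun μ ↦ f.mapsTo_maxGenEigenspace_of_comm ((Commute.refl f).pow_right m) μ)]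
  simp only [trace_pow_restrict_maxGenEigenspace, mul_comm]

theorem isNilpotent_of_forall_ge_trace_pow_eq_zero
    (hchar : ∀ i ∈ Finset.Icc 1 (finrank K V), (i : K) ≠ 0)
    {f : End K V} (hf : ⨆ μ, f.maxGenEigenspace μ = ⊤) {N : ℕ}
    (htr : ∀ m ≥ N, trace K V (f ^ m) = 0) : IsNilpotent f := by
  have eigenvalue_eq_zero : ∀ μ, f.maxGenEigenspace μ ≠ ⊥ → μ = 0 := by
    intro μ hμ
    have hdim : (finrank K (f.maxGenEigenspace μ) : K) ≠ 0 :=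
      hchar _ (Finset.mem_Icc.mpr ⟨Submodule.one_le_finrank_iff.mpr hμ, Submodule.finrank_le _⟩)
    have hpow := mul_pow_eq_zero_of_forall_ge_sum_mul_pow_eq_zero
      (fun m hm ↦ (trace_pow_eq_sum_maxGenEigenspace hf m).symm.trans (htr m hm)) μ
      (by simpa using hμ)
    exact eq_zero_of_pow_eq_zero ((mul_eq_zero.mp hpow).resolve_left hdim)
  refine isNilpotent_of_maxGenEigenspace_zero_eq_top (top_unique (hf ▸ iSup_le fun μ ↦ ?_))
  by_cases hμ : f.maxGenEigenspace μ = ⊥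
  · exact hμ ▸ bot_le
  · exact eigenvalue_eq_zero μ hμ ▸ le_rfl

end Module.End

theorem Matrix.isNilpotent_of_forall_ge_trace_pow_eq_zero {K ι : Type*} [Field K] [Fintype ι]
    [DecidableEq ι] (hchar : ∀ i ∈ Finset.Icc 1 (Fintype.card ι), (i : K) ≠ 0)
    {A : Matrix ι ι K} {N : ℕ} (htr : ∀ m ≥ N, (A ^ m).trace = 0) : IsNilpotent A := by
  let φ := algebraMap K (AlgebraicClosure K)
  rw [← IsNilpotent.map_iff (f := φ.mapMatrix) (Matrix.map_injective φ.injective),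
    ← Matrix.isNilpotent_toLin'_iff]
  refine Module.End.isNilpotent_of_forall_ge_trace_pow_eq_zero (fun i hi ↦ ?_)
    (Module.End.iSup_maxGenEigenspace_eq_top _) fun m (hm : N ≤ m) ↦ ?_
  · rw [Module.finrank_fintype_fun_eq_card] at hi
    exact (map_natCast φ i).symm ▸ (map_ne_zero φ).mpr (hchar i hi)
  · rw [← Matrix.toLin'_pow, Matrix.trace_toLin'_eq, ← map_pow, RingHom.mapMatrix_apply,
      ← AddMonoidHom.map_trace, htr m hm, map_zero]

theorem nilpotent_of_eventual_powers_mem_general {n : ℕ} {K : Type*} [Field K]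
    (hchar : ∀ i ∈ Finset.Icc 1 n, (i : K) ≠ 0)
    (M : Submodule K (Matrix (Fin n) (Fin n) K))
    (htr : ∀ A ∈ M, Matrix.trace A = 0)
    (A : Matrix (Fin n) (Fin n) K)
    (hA : ∃ N : ℕ, ∀ m ≥ N, A ^ m ∈ M) :
    IsNilpotent A := by
  obtain ⟨N, hN⟩ := hA
  exact Matrix.isNilpotent_of_forall_ge_trace_pow_eq_zero (by simpa using hchar)
    fun m hm ↦ htr _ (hN m hm)

theorem nilpotent_of_eventual_powers_mem {n : ℕ} (hn : 1 ≤ n) {K : Type*} [Field K]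
    (hchar : ∀ i ∈ Finset.Icc 1 n, (i : K) ≠ 0)
    (M : Submodule K (Matrix (Fin n) (Fin n) K))
    (htr : ∀ A ∈ M, Matrix.trace A = 0)
    (A : Matrix (Fin n) (Fin n) K)
    (hA : ∃ N : ℕ, ∀ m ≥ N, A ^ m ∈ M) :
    IsNilpotent A :=
  nilpotent_of_eventual_powers_mem_general hchar M htr A hA
end

section
/- Let K be a field and M a left Mathieu subspace of Mat_n(K). Suppose M contains two idempotents E and E' such that E + E' is invertible (e.g., unipotent). Then M = Mat_n(K). -/
/-!
If `e` is an idempotent in a left Mathieu subspace `M`, then all powers `e ^ m` (`m ≥ 1`) lie in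
`M`, so `b * e = b * e ^ m ∈ M` for every `b`: the left ideal generated by `e` lies in `M`.
If moreover `e + f` is a unit for a second idempotent `f ∈ M`, every `a` splits as
`a = a (e + f)⁻¹ e + a (e + f)⁻¹ f ∈ M`.
-/

section LeftMathieu

variable {K R : Type*} [CommSemiring K] [Semiring R] [Module K R]

def Submodule.IsLeftMathieu (M : Submodule K R) : Prop :=
  ∀ a b : R, (∀ m : ℕ, 1 ≤ m → a ^ m ∈ M) → ∃ N : ℕ, ∀ m ≥ N, b * a ^ m ∈ M

namespace Submodule.IsLeftMathieu

variable {M : Submodule K R}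

theorem mul_mem_of_isIdempotentElem (hM : M.IsLeftMathieu) {e : R} (he : IsIdempotentElem e)
    (heM : e ∈ M) (b : R) : b * e ∈ M := by
  obtain ⟨N, hN⟩ := hM e b fun m hm => (he.pow_eq (Nat.one_le_iff_ne_zero.1 hm)).symm ▸ heM
  simpa only [he.pow_eq (by omega : N + 1 ≠ 0)] using hN (N + 1) (by omega)

theorem eq_top_of_isIdempotentElem_of_isUnit_add (hM : M.IsLeftMathieu) {e f : R}
    (he : IsIdempotentElem e) (hf : IsIdempotentElem f) (heM : e ∈ M) (hfM : f ∈ M)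
    (hunit : IsUnit (e + f)) : M = ⊤ := by
  refine eq_top_iff.2 fun a _ => ?_
  obtain ⟨u, hu⟩ := hunit
  have hsplit : a = a * ↑u⁻¹ * e + a * ↑u⁻¹ * f := by
    rw [← mul_add, ← hu, mul_assoc, Units.inv_mul, mul_one]
  rw [hsplit]
  exact M.add_mem (hM.mul_mem_of_isIdempotentElem he heM _)
    (hM.mul_mem_of_isIdempotentElem hf hfM _)

end Submodule.IsLeftMathieu

end LeftMathieu

theorem eq_top_of_idempotents_sum_unit {n : ℕ} {K : Type*} [Field K]
    (M : Submodule K (Matrix (Fin n) (Fin n) K))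
    (hM : ∀ a b : Matrix (Fin n) (Fin n) K,
      (∀ m : ℕ, 1 ≤ m → a ^ m ∈ M) → ∃ N : ℕ, ∀ m ≥ N, b * a ^ m ∈ M)
    (E E' : Matrix (Fin n) (Fin n) K)
    (hE : E * E = E) (hE' : E' * E' = E')
    (hEM : E ∈ M) (hE'M : E' ∈ M)
    (hunit : IsUnit (E + E')) :
    M = ⊤ :=
  Submodule.IsLeftMathieu.eq_top_of_isIdempotentElem_of_isUnit_add hM hE hE' hEM hE'M hunit
end

section
/- Let K be a field, f ∈ K[x₁,...,xₙ] a homogeneous polynomial of degree d, and S ⊆ K a subset with 0 ∈ S and #S ≥ max{d, 2}. If f vanishes at every point of S^n, then f = 0. -/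
/-!
Evaluating a homogeneous `f` of degree `d` at `s • eᵢ` returns `cᵢ sᵈ`, where `cᵢ` is the
coefficient of `xᵢᵈ`. Since `0 ∈ S`, the points `s • eᵢ` with `s ∈ S \ {0}` lie in `Sⁿ`, so every
`cᵢ` vanishes. Every other monomial of degree `d` has degree `< d ≤ #S` in each variable, and
the combinatorial Nullstellensatz (vanishing on a grid whose sides exceed the partial degrees)
gives `f = 0`.
-/

open MvPolynomial

namespace Finsupp

variable {σ : Type*}

theorem eq_single_of_degree_eq_apply {m : σ →₀ ℕ} {i : σ} (h : m.degree = m i) :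
    m = single i (m i) := by
  obtain ⟨r, hr⟩ := le_iff_exists_add.mp (single_le_iff.mpr le_rfl : single i (m i) ≤ m)
  have hr0 : r.degree = 0 := by
    have := congrArg degree hr
    rw [map_add, degree_single, h] at this
    omega
  rw [degree_eq_zero_iff] at hr0
  rwa [hr0, add_zero] at hr

end Finsupp

namespace MvPolynomial.IsHomogeneous

variable {σ R : Type*} [CommSemiring R] {f : MvPolynomial σ R} {d : ℕ}

theorem degree_eq_of_mem_support (hf : f.IsHomogeneous d) {m : σ →₀ ℕ} (hm : m ∈ f.support) :
    m.degree = d := by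
  by_contra h
  exact mem_support_iff.mp hm (hf.coeff_eq_zero h)

theorem eval_piSingle [DecidableEq σ] (hf : f.IsHomogeneous d) (i : σ) (s : R) :
    eval (Pi.single i s) f = coeff (Finsupp.single i d) f * s ^ d := by
  rw [eval_eq]
  refine (Finset.sum_eq_single (Finsupp.single i d) (fun m hm hmi => ?_) (fun h => ?_)).trans ?_
  · obtain ⟨j, hj, hji⟩ : ∃ j ∈ m.support, j ≠ i := by
      by_contra! hsupp
      have hm_eq : m = Finsupp.single i (m i) :=
        Finsupp.eq_single_iff.mpr ⟨fun j hj => Finset.mem_singleton.mpr (hsupp j hj), rfl⟩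
      have hmd := hf.degree_eq_of_mem_support hm
      rw [hm_eq, Finsupp.degree_single] at hmd
      exact hmi (hm_eq.trans (congrArg _ hmd))
    refine mul_eq_zero_of_right _ (Finset.prod_eq_zero hj ?_)
    rw [Pi.single_eq_of_ne hji, zero_pow (Finsupp.mem_support_iff.mp hj)]
  · rw [notMem_support_iff.mp h, zero_mul]
  · rcases eq_or_ne d 0 with rfl | hd
    · simp
    · rw [Finsupp.support_single i hd, Finset.prod_singleton, Pi.single_eq_same,
        Finsupp.single_eq_same]

theorem apply_lt_of_coeff_single_eq_zero (hf : f.IsHomogeneous d) {i : σ}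
    (hi : coeff (Finsupp.single i d) f = 0) {m : σ →₀ ℕ} (hm : m ∈ f.support) : m i < d := by
  have hdeg := hf.degree_eq_of_mem_support hm
  refine (hdeg ▸ Finsupp.le_degree i m).lt_of_ne fun hmi => mem_support_iff.mp hm ?_
  rwa [Finsupp.eq_single_of_degree_eq_apply (hdeg.trans hmi.symm), hmi]

end MvPolynomial.IsHomogeneous

theorem vanish_lemma_homogeneous {n : ℕ} {K : Type*} [Field K] (d : ℕ)
    (f : MvPolynomial (Fin n) K) (hf : f.IsHomogeneous d)
    (S : Finset K) (h0 : (0 : K) ∈ S) (hS : max d 2 ≤ S.card)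
    (hvan : ∀ v : Fin n → K, (∀ i, v i ∈ S) → MvPolynomial.eval v f = 0) :
    f = 0 := by
  obtain ⟨s, hs, hs0⟩ := Finset.exists_mem_ne (by omega : 1 < S.card) 0
  have hcoeff (i : Fin n) : coeff (Finsupp.single i d) f = 0 := by
    have hpt : ∀ j, (Pi.single i s : Fin n → K) j ∈ S := fun j => by
      rcases eq_or_ne j i with rfl | hj
      · rwa [Pi.single_eq_same]
      · rwa [Pi.single_eq_of_ne hj]
    have hval := hvan _ hpt
    rw [hf.eval_piSingle] at hval
    exact (mul_eq_zero.mp hval).resolve_right (pow_ne_zero d hs0)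
  refine eq_zero_of_eval_zero_at_prod_finset f (fun _ => S) (fun i => ?_) hvan
  rw [degreeOf_lt_iff (by omega)]
  exact fun m hm => (hf.apply_lt_of_coeff_single_eq_zero (hcoeff i) hm).trans_le (by omega)
end

section
/- Let K be a field, L/K a field extension, and V a K-subspace of m×n matrices over K. Define d = dim over K(x₁,...,xₙ) of the span of {C·x : C ∈ V}, where x = (x₁,...,xₙ) is a vector of indeterminates. Then for every v ∈ L^n, the L-dimension of the span of {C·v : C ∈ V} (with C viewed in Mat_{m,n}(L)) is at most d. -/
/-!
If `C₁ v, …, C_r v` are linearly independent over `L`, some `r × r` minor of the matrix with these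
columns is nonzero. That minor is the image under `x ↦ v` of the same minor of the polynomial
matrix with columns `C₁ x, …, C_r x`, which is therefore a nonzero polynomial; hence the
`Cᵢ x` are independent over `K[x]`, and so over `K(x)`.
-/

open Matrix Module

theorem LinearIndependent.exists_linearIndependent_comp {L ι m : Type*} [Field L] [Fintype ι]
    [Fintype m] {u : ι → m → L} (hu : LinearIndependent L u) :
    ∃ ρ : ι → m, LinearIndependent L fun i ↦ u i ∘ ρ := by
  classical
  let U : Matrix ι m L := Matrix.of u
  obtain ⟨κ, a, -, hspan, hκ⟩ := exists_linearIndependent' L U.col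
  have : Fintype κ := @Fintype.ofFinite _ hκ.finite
  have hcard : Fintype.card κ = Fintype.card ι := by
    rw [← finrank_span_eq_card hκ, hspan, ← rank_eq_finrank_span_cols]
    exact hu.rank_matrix (M := U)
  let e : ι ≃ κ := (Fintype.equivOfCardEq hcard).symm
  refine ⟨a ∘ e, linearIndependent_rows_iff_isUnit (A := U.submatrix id (a ∘ e)) |>.mpr ?_⟩
  exact linearIndependent_cols_iff_isUnit.mp (hκ.comp e e.injective)

theorem LinearIndependent.of_ringHom_comp {R L ι m : Type*} [CommRing R] [IsDomain R] [Field L]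
    [Fintype ι] [Fintype m] (φ : R →+* L) {u : ι → m → R}
    (hu : LinearIndependent L fun i ↦ φ ∘ u i) : LinearIndependent R u := by
  classical
  obtain ⟨ρ, hρ⟩ := hu.exists_linearIndependent_comp
  let Q : Matrix ι ι R := Matrix.of fun i k ↦ u i (ρ k)
  have hQ : IsUnit (Q.map φ).det :=
    (isUnit_iff_isUnit_det _).mp (linearIndependent_rows_iff_isUnit.mp hρ)
  have hdet : Q.det ≠ 0 := by
    rintro h0
    rw [← RingHom.mapMatrix_apply, ← RingHom.map_det, h0, map_zero] at hQ
    exact not_isUnit_zero hQ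
  exact .of_comp (LinearMap.funLeft R R ρ) (linearIndependent_rows_of_det_ne_zero hdet)

theorem finrank_span_range_ringHom_comp_le {R L F ι m : Type*} [CommRing R] [IsDomain R]
    [Field L] [Field F] [Algebra R F] [IsFractionRing R F] [Fintype m] (φ : R →+* L)
    (u : ι → m → R) :
    finrank L (Submodule.span L (Set.range fun i ↦ φ ∘ u i)) ≤
      finrank F (Submodule.span F (Set.range fun i ↦ algebraMap R F ∘ u i)) := by
  obtain ⟨κ, a, -, hspan, hκ⟩ := exists_linearIndependent' L fun i ↦ φ ∘ u i
  have : Fintype κ := @Fintype.ofFinite _ hκ.finite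
  have hR : LinearIndependent R (u ∘ a) := .of_ringHom_comp φ hκ
  have hF : LinearIndependent F fun k ↦ algebraMap R F ∘ u (a k) :=
    (LinearIndependent.iff_fractionRing R F).mp <|
      hR.map' (LinearMap.compLeft (Algebra.linearMap R F) m)
        (LinearMap.ker_eq_bot.mpr (IsFractionRing.injective R F).comp_left)
  calc finrank L (Submodule.span L (Set.range fun i ↦ φ ∘ u i))
      = Fintype.card κ := by rw [← hspan, finrank_span_eq_card hκ]
    _ = finrank F (Submodule.span F (Set.range fun k ↦ algebraMap R F ∘ u (a k))) :=
      (finrank_span_eq_card hF).symm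
    _ ≤ _ := Submodule.finrank_mono <| Submodule.span_mono <|
      Set.range_comp_subset_range a fun i ↦ algebraMap R F ∘ u i

theorem AlgHom.comp_map_algebraMap_mulVec {K A B m n : Type*} [CommSemiring K] [Semiring A]
    [Semiring B] [Algebra K A] [Algebra K B] [Fintype n] (f : A →ₐ[K] B) (C : Matrix m n K)
    (w : n → A) : f ∘ (C.map (algebraMap K A) *ᵥ w) = C.map (algebraMap K B) *ᵥ (f ∘ w) := by
  ext i
  rw [Function.comp_apply, ← f.coe_toRingHom, RingHom.map_mulVec, Matrix.map_map]
  simp only [f.coe_toRingHom, Function.comp_def, AlgHom.commutes]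

theorem dim_specialization_le {m n : ℕ} {K L : Type*} [Field K] [Field L] [Algebra K L]
    (V : Submodule K (Matrix (Fin m) (Fin n) K)) (d : ℕ)
    (hd : d = Module.finrank (FractionRing (MvPolynomial (Fin n) K))
      (Submodule.span (FractionRing (MvPolynomial (Fin n) K))
        {w : Fin m → FractionRing (MvPolynomial (Fin n) K) | ∃ C ∈ V,
          w = (C.map (algebraMap K (FractionRing (MvPolynomial (Fin n) K)))).mulVec
            (fun i => algebraMap (MvPolynomial (Fin n) K)
              (FractionRing (MvPolynomial (Fin n) K)) (MvPolynomial.X i))})) :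
    ∀ v : Fin n → L,
      Module.finrank L (Submodule.span L
        {w : Fin m → L | ∃ C ∈ V, w = (C.map (algebraMap K L)).mulVec v}) ≤ d := by
  intro v
  let R := MvPolynomial (Fin n) K
  let F := FractionRing R
  let u : V → Fin m → R := fun C ↦ C.1.map (algebraMap K R) *ᵥ MvPolynomial.X
  have hL : {w : Fin m → L | ∃ C ∈ V, w = C.map (algebraMap K L) *ᵥ v} =
      Set.range fun C ↦ MvPolynomial.aeval v ∘ u C := by
    have key (C : V) : MvPolynomial.aeval v ∘ u C = C.1.map (algebraMap K L) *ᵥ v := by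
      rw [AlgHom.comp_map_algebraMap_mulVec]
      exact congrArg _ (funext (MvPolynomial.aeval_X v))
    ext w
    simp only [key, Set.mem_ofPred_eq, Set.mem_range, Subtype.exists, exists_prop, eq_comm]
  have hF : {w : Fin m → F | ∃ C ∈ V,
      w = C.map (algebraMap K F) *ᵥ fun i ↦ algebraMap R F (MvPolynomial.X i)} =
      Set.range fun C ↦ algebraMap R F ∘ u C := by
    have key (C : V) : algebraMap R F ∘ u C =
        C.1.map (algebraMap K F) *ᵥ fun i ↦ algebraMap R F (MvPolynomial.X i) :=
      (IsScalarTower.toAlgHom K R F).comp_map_algebraMap_mulVec C.1 MvPolynomial.X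
    ext w
    simp only [key, Set.mem_ofPred_eq, Set.mem_range, Subtype.exists, exists_prop, eq_comm]
  rw [hd, hL, hF]
  exact (finrank_span_range_ringHom_comp_le (F := F) (MvPolynomial.aeval v).toRingHom u :)
end

section
/- Let K be a field, L/K a field extension, and V a K-subspace of Mat_{m,n}(K). Define d = dim_{K(x)} span{C·x : C ∈ V} where x = (x₁,...,xₙ) are indeterminates. If #L ≥ d, then there exists v ∈ L^n such that dim_L span{C·v : C ∈ V} = d. -/
/-! Pick `g₁, …, g_k` spanning `V` and let `P` be the `m × k` matrix over `K[x]` whose columns are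
the linear forms `gⱼ x`. Both dimensions are ranks of specialisations of `P`: along `K[x] ⊆ K(x)`
and along `x ↦ v`. A rank is the size of a largest nonvanishing minor, and a minor nonzero after
some specialisation is already nonzero over `K[x]`, so no specialisation exceeds the rank `d` over
`K(x)`. Conversely a `d × d` minor nonzero over `K(x)` is a nonzero form of degree `d`, and a
nonzero homogeneous polynomial of degree `d` does not vanish on all of `Lⁿ` once `#L ≥ d`. -/

open Matrix MvPolynomial Module Submodule

namespace Matrix

variable {m n R : Type*}

theorem det_submatrix_map {S ι : Type*} [Fintype ι] [DecidableEq ι] [CommRing R] [CommRing S]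
    (f : R →+* S) (A : Matrix m n R) (r : ι → m) (c : ι → n) :
    ((A.map f).submatrix r c).det = f (A.submatrix r c).det := by
  rw [RingHom.map_det]
  rfl

variable [Fintype n]

theorem le_rank_of_det_submatrix_ne_zero [CommRing R] [IsDomain R] {k : ℕ} (A : Matrix m n R)
    (r : Fin k → m) (c : Fin k → n) (h : (A.submatrix r c).det ≠ 0) : k ≤ A.rank := by
  simpa [rank_of_det_ne_zero h] using rank_submatrix_le A r c

theorem exists_linearIndependent_row_comp [Finite m] [Field R] (A : Matrix m n R) {k : ℕ}
    (hk : A.rank = k) : ∃ r : Fin k → m, LinearIndependent R (A.row ∘ r) := by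
  obtain ⟨κ, a, ha, hspan, hli⟩ := exists_linearIndependent' R A.row
  have := Finite.of_injective a ha
  have := Fintype.ofFinite κ
  have hcard : Fintype.card κ = k := by
    rw [linearIndependent_iff_card_eq_finrank_span.mp hli, Set.finrank, hspan,
      ← rank_eq_finrank_span_row, hk]
  obtain e := (Fintype.equivFinOfCardEq hcard).symm
  exact ⟨a ∘ e, hli.comp e e.injective⟩

theorem exists_det_submatrix_ne_zero [Fintype m] [Field R] (A : Matrix m n R) :
    ∃ (r : Fin A.rank → m) (c : Fin A.rank → n), (A.submatrix r c).det ≠ 0 := by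
  obtain ⟨r, hr⟩ := A.exists_linearIndependent_row_comp rfl
  have hrank : (A.submatrix r id)ᵀ.rank = A.rank := by
    rw [rank_transpose, LinearIndependent.rank_matrix (M := A.submatrix r id) hr, Fintype.card_fin]
  obtain ⟨c, hc⟩ := (A.submatrix r id)ᵀ.exists_linearIndependent_row_comp hrank
  exact ⟨r, c, ((isUnit_iff_isUnit_det _).mp (linearIndependent_cols_iff_isUnit.mp hc)).ne_zero⟩

theorem rank_map_le_rank_map_of_injective [Fintype m] {E₁ E₂ : Type*} [CommRing R] [Field E₁]
    [Field E₂] (A : Matrix m n R) {f : R →+* E₁} (hf : Function.Injective f) (g : R →+* E₂) :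
    (A.map g).rank ≤ (A.map f).rank := by
  obtain ⟨r, c, hrc⟩ := (A.map g).exists_det_submatrix_ne_zero
  refine (A.map f).le_rank_of_det_submatrix_ne_zero r c ?_
  rw [det_submatrix_map] at hrc ⊢
  exact (map_ne_zero_iff f hf).mpr fun h => hrc (by rw [h, map_zero])

end Matrix

namespace MvPolynomial

theorem IsHomogeneous.det {σ ι R : Type*} [CommRing R] [Fintype ι] [DecidableEq ι]
    {M : Matrix ι ι (MvPolynomial σ R)} {e : ℕ} (h : ∀ i j, (M i j).IsHomogeneous e) :
    M.det.IsHomogeneous (Fintype.card ι * e) := by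
  rw [Matrix.det_apply]
  refine IsHomogeneous.sum _ _ _ fun p _ => ?_
  have hp : (∏ i, M (p i) i).IsHomogeneous (Fintype.card ι * e) := by
    simpa using IsHomogeneous.prod Finset.univ _ (fun _ => e) fun i _ => h (p i) i
  rw [Units.smul_def]
  exact zsmul_mem (mem_homogeneousSubmodule _ _ |>.mpr hp) _

end MvPolynomial

section Specialization

variable {m n K E : Type*} [Fintype n] [Field K] [Field E] [Algebra K E]

noncomputable def mulVecXMatrix {k : ℕ} (g : Fin k → Matrix m n K) :
    Matrix m (Fin k) (MvPolynomial n K) :=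
  Matrix.of fun i j => ((g j).map C *ᵥ X) i

theorem isHomogeneous_mulVecXMatrix {k : ℕ} (g : Fin k → Matrix m n K) (i : m) (j : Fin k) :
    (mulVecXMatrix g i j).IsHomogeneous 1 :=
  IsHomogeneous.sum _ _ _ fun _ _ => isHomogeneous_C_mul_X _ _

variable (K) in
def mapMulVecₗ (u : n → E) : Matrix m n K →ₗ[K] m → E where
  toFun M := M.map (algebraMap K E) *ᵥ u
  map_add' M N := by simp [Matrix.map_add, add_mulVec]
  map_smul' c M := by ext; simp [Matrix.map_smul, smul_mulVec, Algebra.smul_def]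

theorem finrank_span_mulVec_eq_rank_map [Fintype m] {k : ℕ} (g : Fin k → Matrix m n K)
    (ψ : MvPolynomial n K →+* E) (hψ : ψ.comp C = algebraMap K E) {u : n → E}
    (hu : ∀ l, ψ (X l) = u l) :
    finrank E (span E {w | ∃ M ∈ span K (Set.range g), w = M.map (algebraMap K E) *ᵥ u}) =
      ((mulVecXMatrix g).map ψ).rank := by
  have hcol : ((mulVecXMatrix g).map ψ).col = mapMulVecₗ K u ∘ g := by
    ext j i
    simp only [col_apply, map_apply, mulVecXMatrix, of_apply, RingHom.map_mulVec,
      Function.comp_apply, mapMulVecₗ, LinearMap.coe_mk, AddHom.coe_mk]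
    rw [Matrix.map_map, ← RingHom.coe_comp, hψ, show ⇑ψ ∘ X = u from funext hu]
  have hset : {w | ∃ M ∈ span K (Set.range g), w = M.map (algebraMap K E) *ᵥ u} =
      mapMulVecₗ K u '' span K (Set.range g) := by
    ext w; simp [mapMulVecₗ, eq_comm]
  rw [rank_eq_finrank_span_cols, hcol, hset, ← map_coe, map_span, span_span_of_tower,
    Set.range_comp]

theorem exists_rank_map_le_rank_map_eval₂Hom {σ L F : Type*} [Fintype m] [Field L] [Algebra K L]
    [Field F] (P : Matrix m n (MvPolynomial σ K)) (hP : ∀ i j, (P i j).IsHomogeneous 1)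
    (f : MvPolynomial σ K →+* F) (hL : ((P.map f).rank : Cardinal) ≤ Cardinal.mk L) :
    ∃ v : σ → L, (P.map f).rank ≤ (P.map (eval₂Hom (algebraMap K L) v)).rank := by
  obtain ⟨r, c, hrc⟩ := (P.map f).exists_det_submatrix_ne_zero
  rw [det_submatrix_map] at hrc
  set q := (P.submatrix r c).det
  have hqL : q.map (algebraMap K L) ≠ 0 :=
    (map_ne_zero_iff _ (map_injective _ (algebraMap K L).injective)).mpr
      fun h => hrc (by rw [h, map_zero])
  have hhom : (q.map (algebraMap K L)).IsHomogeneous (P.map f).rank := by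
    simpa only [Fintype.card_fin, mul_one] using
      (IsHomogeneous.det (M := P.submatrix r c) fun i j => hP (r i) (c j)).map (algebraMap K L)
  obtain ⟨v, hv⟩ : ∃ v, eval v (q.map (algebraMap K L)) ≠ 0 := by
    by_contra! h
    exact hqL (hhom.eq_zero_of_forall_eval_eq_zero_of_le_card h hL)
  refine ⟨v, le_rank_of_det_submatrix_ne_zero _ r c ?_⟩
  rwa [det_submatrix_map, coe_eval₂Hom, ← eval_map]

end Specialization

theorem exists_specialization_of_card_ge {m n : ℕ} {K L : Type*} [Field K] [Field L]
    [Algebra K L]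
    (V : Submodule K (Matrix (Fin m) (Fin n) K)) (d : ℕ)
    (hd : d = Module.finrank (FractionRing (MvPolynomial (Fin n) K))
      (Submodule.span (FractionRing (MvPolynomial (Fin n) K))
        {w : Fin m → FractionRing (MvPolynomial (Fin n) K) | ∃ C ∈ V,
          w = (C.map (algebraMap K (FractionRing (MvPolynomial (Fin n) K)))).mulVec
            (fun i => algebraMap (MvPolynomial (Fin n) K)
              (FractionRing (MvPolynomial (Fin n) K)) (MvPolynomial.X i))}))
    (hL : (d : Cardinal) ≤ Cardinal.mk L) :
    ∃ v : Fin n → L,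
      Module.finrank L (Submodule.span L
        {w : Fin m → L | ∃ C ∈ V, w = (C.map (algebraMap K L)).mulVec v}) = d := by
  obtain ⟨k, g, rfl⟩ := fg_iff_exists_fin_generating_family.mp (IsNoetherian.noetherian V)
  have hF : Function.Injective (algebraMap (MvPolynomial (Fin n) K)
      (FractionRing (MvPolynomial (Fin n) K))) := IsFractionRing.injective _ _
  rw [finrank_span_mulVec_eq_rank_map g _ (IsScalarTower.algebraMap_eq _ _ _).symm
    fun _ => rfl] at hd
  subst hd
  obtain ⟨v, hv⟩ := exists_rank_map_le_rank_map_eval₂Hom _ (isHomogeneous_mulVecXMatrix g) _ hL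
  refine ⟨v, ?_⟩
  rw [finrank_span_mulVec_eq_rank_map g (eval₂Hom (algebraMap K L) v) (by ext; simp)
    (eval₂Hom_X' _ v)]
  exact le_antisymm (rank_map_le_rank_map_of_injective _ hF _) hv
end

section
/- Let K be a field with p := char K satisfying p ∉ {1,2,...,n-1}. Let a ∈ K be such that 0 ∉ {1,2,...,n} + {0,a} in K (i.e., a ∉ {-1,-2,...,-n} and none of 1,...,n is zero except possibly addressed by the characteristic assumption; in particular n + a ≠ 0). Define M = {M ∈ Mat_n(K) : M_{n1} = ⋯ = M_{n,n-1} = 0 and tr M + a·M_{nn} = 0}. Then M contains no nonzero idempotent matrix. -/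
/-!
A nonzero idempotent matrix `E` has trace equal to its rank `r ∈ {1, …, n}`. If the last row of
`E` vanishes off the diagonal, the corner entry `E n n` is an idempotent scalar, hence `0` or `1`,
so `tr E + a E n n` is `r` or `r + a`, neither of which is zero.
-/

theorem Matrix.rank_eq_zero_iff {m n K : Type*} [Fintype n] [DecidableEq n] [Field K]
    {A : Matrix m n K} : A.rank = 0 ↔ A = 0 := by
  rw [Matrix.rank, Submodule.finrank_eq_zero, LinearMap.range_eq_bot, ← Matrix.toLin'_apply',
    map_eq_zero_iff _ Matrix.toLin'.injective]

theorem IsIdempotentElem.matrix_trace_eq_rank {n K : Type*} [Fintype n] [DecidableEq n] [Field K]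
    {E : Matrix n n K} (hE : IsIdempotentElem E) : E.trace = E.rank := by
  have hf : IsIdempotentElem (Matrix.toLin' E) := hE.map Matrix.toLinAlgEquiv'
  rw [← Matrix.trace_toLin'_eq, (LinearMap.IsIdempotentElem.isProj_range _ hf).trace,
    Matrix.rank, Matrix.toLin'_apply']

theorem Matrix.mul_apply_of_row_eq_zero_off_diag {n R : Type*} [Fintype n]
    [NonUnitalNonAssocSemiring R] {A B : Matrix n n R} {i : n} (hA : ∀ j, j ≠ i → A i j = 0)
    (k : n) : (A * B) i k = A i i * B i k := by
  rw [Matrix.mul_apply, Finset.sum_eq_single i (fun j _ hj => by rw [hA j hj, zero_mul])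
    (by simp)]

theorem IsIdempotentElem.apply_self_of_row_eq_zero_off_diag {n R : Type*} [Fintype n]
    [NonUnitalNonAssocSemiring R] {E : Matrix n n R} (hE : IsIdempotentElem E) {i : n}
    (hrow : ∀ j, j ≠ i → E i j = 0) : IsIdempotentElem (E i i) := by
  have h := congrFun (congrFun hE.eq i) i
  rwa [Matrix.mul_apply_of_row_eq_zero_off_diag hrow] at h

theorem no_nontrivial_idempotent {n : ℕ} (hn : 1 ≤ n) {K : Type*} [Field K]
    (a : K)
    (ha : ∀ i ∈ Finset.Icc 1 n, (i : K) ≠ 0 ∧ (i : K) + a ≠ 0)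
    (E : Matrix (Fin n) (Fin n) K)
    (hrow : ∀ j : Fin n, j ≠ ⟨n - 1, by omega⟩ → E ⟨n - 1, by omega⟩ j = 0)
    (htr : Matrix.trace E + a * E ⟨n - 1, by omega⟩ ⟨n - 1, by omega⟩ = 0)
    (hE : E * E = E) :
    E = 0 := by
  by_contra hE0
  have hrank : E.rank ∈ Finset.Icc 1 n := Finset.mem_Icc.mpr
    ⟨Nat.one_le_iff_ne_zero.mpr (mt Matrix.rank_eq_zero_iff.mp hE0), E.rank_le_width⟩
  rw [IsIdempotentElem.matrix_trace_eq_rank hE] at htr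
  rcases IsIdempotentElem.iff_eq_zero_or_one.mp
      (IsIdempotentElem.apply_self_of_row_eq_zero_off_diag hE hrow) with h0 | h1
  · exact (ha _ hrank).1 (by rwa [h0, mul_zero, add_zero] at htr)
  · exact (ha _ hrank).2 (by rwa [h1, mul_one] at htr)
end

section
/- Let K be a field and I a maximal left ideal among left ideals of Mat_n(K) contained in a given K-subspace M of Mat_n(K). Then I is unique, dim_K I = n·k for some 0 ≤ k ≤ n, and there exists T ∈ GL_n(K) with T^{-1}·I·T = {A ∈ Mat_n(K) : A·e_j = 0 for all j > k}. Moreover I is generated as a left ideal by a single idempotent. -/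
/-!
Mat_n(K) is semisimple, so every left ideal is `Mat_n(K) e` for an idempotent `e`, i.e. the set of
matrices `A` with `A e = A`. An idempotent `e` of rank `k` is diagonal, with `k` ones followed by
zeros, in a basis adapted to `range e ⊕ ker e`; conjugating by the change of basis turns the
condition `A e = A` into the vanishing of the last `n - k` columns. Reading `A e = A` row by row
gives `dim (Mat_n(K) e) = n · rank e`. Uniqueness is formal: the sum of two left ideals inside `M`
is again inside `M`.
-/

open Module LinearMap Matrix

theorem Ideal.eq_of_maximal_of_subset {R : Type*} [Semiring R] (M : AddSubmonoid R)
    {I J : Ideal R} (hIM : (I : Set R) ⊆ M)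
    (hImax : ∀ J' : Ideal R, (J' : Set R) ⊆ M → I ≤ J' → J' = I)
    (hJM : (J : Set R) ⊆ M)
    (hJmax : ∀ J' : Ideal R, (J' : Set R) ⊆ M → J ≤ J' → J' = J) :
    J = I := by
  have hsup : ((I ⊔ J : Ideal R) : Set R) ⊆ M := by
    intro _ hx
    obtain ⟨a, ha, b, hb, rfl⟩ := Submodule.mem_sup.1 hx
    exact M.add_mem (hIM ha) (hJM hb)
  rw [← hJmax _ hsup le_sup_right, hImax _ hsup le_sup_left]

theorem IsIdempotentElem.mem_span_singleton_iff_mul_eq {R : Type*} [Semiring R] {e x : R}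
    (he : IsIdempotentElem e) : x ∈ Ideal.span {e} ↔ x * e = x := by
  refine ⟨fun hx => ?_, fun h => Ideal.mem_span_singleton'.2 ⟨x, h⟩⟩
  obtain ⟨a, rfl⟩ := Ideal.mem_span_singleton'.1 hx
  rw [mul_assoc, he.eq]

theorem Ideal.image_conj_span_singleton {R : Type*} [Semiring R] (T : Rˣ) (e : R) :
    (fun A => ((T⁻¹ : Rˣ) : R) * A * T) '' (Ideal.span {e} : Set R) =
      Ideal.span {((T⁻¹ : Rˣ) : R) * e * T} := by
  ext B
  simp only [Set.mem_image, SetLike.mem_coe, Ideal.mem_span_singleton']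
  constructor
  · rintro ⟨_, ⟨a, rfl⟩, rfl⟩
    exact ⟨((T⁻¹ : Rˣ) : R) * a * T, by simp [mul_assoc]⟩
  · rintro ⟨c, rfl⟩
    exact ⟨_, ⟨T * c * ((T⁻¹ : Rˣ) : R), rfl⟩, by simp [mul_assoc]⟩

theorem Matrix.finrank_span_of_isIdempotentElem {m K : Type*} [Fintype m] [DecidableEq m]
    [Field K] {e : Matrix m m K} (he : IsIdempotentElem e) :
    finrank K ((Ideal.span {e}).restrictScalars K) = Fintype.card m * e.rank := by
  have hrow : ∀ v ∈ range e.vecMulLinear, v ᵥ* e = v := by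
    rintro _ ⟨w, rfl⟩
    simp [vecMul_vecMul, he.eq]
  let rows : (Ideal.span {e}).restrictScalars K ≃ₗ[K] (m → range e.vecMulLinear) :=
    { toFun := fun A i => ⟨A.1 i, A.1 i, by
        rw [vecMulLinear_apply, ← mul_apply_eq_vecMul, he.mem_span_singleton_iff_mul_eq.1 A.2]⟩
      invFun := fun v => ⟨of fun i => v i, he.mem_span_singleton_iff_mul_eq.2 <| by
        funext i
        exact (mul_apply_eq_vecMul (of fun i => (v i : m → K)) e i).trans (hrow _ (v i).2)⟩
      map_add' := fun _ _ => rfl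
      map_smul' := fun _ _ => rfl
      left_inv := fun _ => rfl
      right_inv := fun _ => rfl }
  rw [rows.finrank_eq, finrank_pi_fintype, Finset.sum_const, Finset.card_univ, smul_eq_mul,
    ← mulVecLin_transpose, ← rank_transpose]
  rfl

theorem IsIdempotentElem.exists_basis_apply_eq_ite {K V : Type*} [Field K] [AddCommGroup V]
    [Module K V] [FiniteDimensional K V] {f : V →ₗ[K] V} (hf : IsIdempotentElem f) {n : ℕ}
    (hn : finrank K V = n) :
    ∃ b : Basis (Fin n) K V,
      ∀ j, f (b j) = if (j : ℕ) < finrank K (range f) then b j else 0 := by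
  have hc := hf.isCompl
  have hdim : finrank K (range f) + finrank K (ker f) = n :=
    (Submodule.finrank_add_eq_of_isCompl hc).trans hn
  let σ := finSumFinEquiv.trans (finCongr hdim)
  let b := ((finBasis K (range f)).prod (finBasis K (ker f))).map
    (Submodule.prodEquivOfIsCompl _ _ hc)
  refine ⟨b.reindex σ, fun j => ?_⟩
  obtain ⟨i | i, rfl⟩ := σ.surjective j
  · simpa [b, σ] using hf.mem_range_iff.1 (Subtype.prop _)
  · simp [b, σ]

theorem Matrix.exists_conj_eq_diagonal_of_isIdempotentElem {K : Type*} [Field K] {n : ℕ}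
    {e : Matrix (Fin n) (Fin n) K} (he : IsIdempotentElem e) :
    ∃ T : (Matrix (Fin n) (Fin n) K)ˣ,
      ((T⁻¹ : (Matrix (Fin n) (Fin n) K)ˣ) : Matrix (Fin n) (Fin n) K) * e *
          (T : Matrix (Fin n) (Fin n) K) =
        diagonal fun j : Fin n => if (j : ℕ) < e.rank then 1 else 0 := by
  have hf : IsIdempotentElem e.mulVecLin := by
    rw [IsIdempotentElem, Module.End.mul_eq_comp, ← mulVecLin_mul, he.eq]
  obtain ⟨b, hb⟩ : ∃ b : Basis (Fin n) K (Fin n → K),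
      ∀ j, e.mulVecLin (b j) = if (j : ℕ) < e.rank then b j else 0 :=
    hf.exists_basis_apply_eq_ite (finrank_fin_fun K)
  let B := Pi.basisFun K (Fin n)
  refine ⟨⟨B.toMatrix b, b.toMatrix B, B.toMatrix_mul_toMatrix_flip b,
    b.toMatrix_mul_toMatrix_flip B⟩, ?_⟩
  change b.toMatrix B * e * B.toMatrix b = _
  conv_lhs => rw [← toMatrix'_toLin' e, toLin'_apply', ← LinearMap.toMatrix_eq_toMatrix']
  rw [basis_toMatrix_mul_linearMap_toMatrix_mul_basis_toMatrix]
  ext i j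
  rw [LinearMap.toMatrix_apply, hb, diagonal_apply]
  rcases eq_or_ne i j with rfl | hij
  · split_ifs <;> simp_all
  · split_ifs <;> simp [hij]

theorem Matrix.isIdempotentElem_diagonal {n R : Type*} [Fintype n] [DecidableEq n] [Semiring R]
    {d : n → R} (hd : ∀ i, IsIdempotentElem (d i)) : IsIdempotentElem (diagonal d) := by
  rw [IsIdempotentElem.eq_def, diagonal_mul_diagonal]
  exact congrArg diagonal (funext hd)

theorem Matrix.mul_diagonal_ite_eq_self_iff {m R : Type*} [Semiring R] {n k : ℕ}
    {B : Matrix m (Fin n) R} :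
    B * diagonal (fun j : Fin n => if (j : ℕ) < k then (1 : R) else 0) = B ↔
      ∀ j : Fin n, k ≤ (j : ℕ) → B *ᵥ Pi.single j 1 = 0 := by
  simp only [← Matrix.ext_iff, mul_diagonal, mulVec_single_one, funext_iff, col_apply,
    Pi.zero_apply]
  constructor
  · intro h j hj i
    simpa [not_lt.2 hj] using (h i j).symm
  · intro h i j
    split_ifs with hj
    · exact mul_one _
    · rw [mul_zero, h j (not_lt.1 hj) i]

theorem maximal_left_ideal_in_subspace {n : ℕ} {K : Type*} [Field K]
    (M : Submodule K (Matrix (Fin n) (Fin n) K))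
    (I : Ideal (Matrix (Fin n) (Fin n) K))
    (hIM : (I : Set (Matrix (Fin n) (Fin n) K)) ⊆ M)
    (hmax : ∀ J : Ideal (Matrix (Fin n) (Fin n) K),
      (J : Set (Matrix (Fin n) (Fin n) K)) ⊆ M → I ≤ J → J = I) :
    (∀ J : Ideal (Matrix (Fin n) (Fin n) K),
      (J : Set (Matrix (Fin n) (Fin n) K)) ⊆ M →
      (∀ J' : Ideal (Matrix (Fin n) (Fin n) K),
        (J' : Set (Matrix (Fin n) (Fin n) K)) ⊆ M → J ≤ J' → J' = J) → J = I) ∧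
    (∃ k ≤ n,
      Module.finrank K (I.restrictScalars K) = n * k ∧
      ∃ T : (Matrix (Fin n) (Fin n) K)ˣ,
        (fun A => ((T⁻¹ : (Matrix (Fin n) (Fin n) K)ˣ) : Matrix (Fin n) (Fin n) K) *
            A * (T : Matrix (Fin n) (Fin n) K)) '' (I : Set (Matrix (Fin n) (Fin n) K)) =
          {A : Matrix (Fin n) (Fin n) K | ∀ j : Fin n, k ≤ (j : ℕ) →
            A.mulVec (Pi.single j 1) = 0}) ∧
    ∃ e : Matrix (Fin n) (Fin n) K, e * e = e ∧ I = Ideal.span {e} := by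
  obtain ⟨e, he, rfl⟩ := IsSemisimpleRing.ideal_eq_span_idempotent I
  obtain ⟨T, hT⟩ := exists_conj_eq_diagonal_of_isIdempotentElem he
  have hD : IsIdempotentElem
      (diagonal fun j : Fin n => if (j : ℕ) < e.rank then (1 : K) else 0) :=
    isIdempotentElem_diagonal fun j => by
      split_ifs
      exacts [.one, .zero]
  refine ⟨fun J hJM hJmax => Ideal.eq_of_maximal_of_subset M.toAddSubmonoid hIM hmax hJM hJmax,
    ⟨e.rank, e.rank_le_width, ?_, T, ?_⟩, e, he, rfl⟩
  · rw [finrank_span_of_isIdempotentElem he, Fintype.card_fin]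
  · ext B
    rw [Ideal.image_conj_span_singleton, hT, SetLike.mem_coe, hD.mem_span_singleton_iff_mul_eq,
      mul_diagonal_ite_eq_self_iff]
    rfl
end
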